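/- arXiv:2211.06606 — 3 statements merged into one kernel-verified Lean document; each statement's English description precedes it below -/
import Mathlib

section
/- Let $A_{j,\ell,v}$ denote the number of families of $\ell$ distinct $v$-element subsets of $\{1,\dots,j\}$ whose union is all of $\{1,\dots,j\}$. Then $A_{j,v} := \sum_{\ell=1}^{\binom{j}{v}} (-1)^{\ell-1} A_{j,\ell,v} = (-1)^{j-v}\binom{j-1}{v-1}$ for all integers $j,v$ with $\max\{2,v\} \le j$. -/
/-!
Expanding the indicator of `⋃ F = univ` as `∑_{R ⊆ (⋃ F)ᶜ} (-1)^|R|` and swapping the sums turns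
the signed count of covers drawn from a family `𝒮` into the signed count of the sets `R` that meet
every member of `𝒮`. A set meets every `v`-subset of a `j`-set iff its complement has fewer than
`v` elements, so the signed count of `v`-covers is
`-(-1)^j ∑_{k<v} (-1)^k C(j,k) = (-1)^(j+v) C(j-1,v-1)`.
-/

/-- `vCovers j ℓ v`: the families of `ℓ` pairwise distinct `v`-element subsets
of `{1,…,j}` (modelled as `Fin j`) whose union is all of `{1,…,j}`. -/
def vCovers (j ℓ v : ℕ) : Finset (Finset (Finset (Fin j))) :=
  Finset.univ.filter
    (fun F => F.card = ℓ ∧ (∀ S ∈ F, S.card = v) ∧ F.sup id = Finset.univ)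

/-- `A j ℓ v`: the number of `v`-covers of size `ℓ` of a `j`-element set. -/
def numVCovers (j ℓ v : ℕ) : ℕ := (vCovers j ℓ v).card

open Finset

section Coverings

variable {α : Type*} [Fintype α]

theorem sum_card_lt_neg_one_pow_card (v : ℕ) :
    ∑ T : Finset α with #T < v, (-1 : ℤ) ^ #T =
      ∑ k ∈ range v, (-1 : ℤ) ^ k * (Fintype.card α).choose k := by
  rw [← sum_fiberwise_of_maps_to (g := card) (t := range v) (by simp)]
  refine sum_congr rfl fun k hk => ?_
  have hfiber : ({T ∈ {T : Finset α | #T < v} | #T = k} : Finset _) = powersetCard k univ := by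
    ext T
    simp only [mem_filter, mem_univ, true_and, mem_powersetCard, subset_univ]
    grind
  rw [hfiber, sum_congr rfl fun T hT => by rw [(mem_powersetCard.1 hT).2], sum_const,
    card_powersetCard, card_univ, nsmul_eq_mul, mul_comm]

variable [DecidableEq α]

def coverings (𝒮 : Finset (Finset α)) : Finset (Finset (Finset α)) :=
  {F ∈ 𝒮.powerset | F.sup id = univ}

theorem sum_coverings_neg_one_pow_card (𝒮 : Finset (Finset α)) :
    ∑ F ∈ coverings 𝒮, (-1 : ℤ) ^ #F =
      ∑ R : Finset α with ∀ S ∈ 𝒮, ¬ Disjoint S R, (-1 : ℤ) ^ #R := by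
  have hdisj (s : Finset α) : ({R | Disjoint s R} : Finset (Finset α)) = sᶜ.powerset := by
    ext R
    simp [subset_compl_iff_disjoint_left]
  calc ∑ F ∈ coverings 𝒮, (-1 : ℤ) ^ #F
      = ∑ F ∈ 𝒮.powerset, ∑ R with Disjoint (F.sup id) R, (-1 : ℤ) ^ #F * (-1) ^ #R := by
        rw [coverings, sum_filter]
        refine sum_congr rfl fun F _ => ?_
        simp only [← mul_sum, hdisj, sum_powerset_neg_one_pow_card, compl_eq_empty_iff]
        split_ifs <;> simp
    _ = ∑ R, ∑ F ∈ {S ∈ 𝒮 | Disjoint S R}.powerset, (-1 : ℤ) ^ #F * (-1) ^ #R :=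
        sum_comm' fun F R => by
          simp only [mem_powerset, mem_filter, mem_univ, true_and, Finset.disjoint_sup_left,
            subset_iff, id]
          grind
    _ = ∑ R : Finset α with ∀ S ∈ 𝒮, ¬ Disjoint S R, (-1 : ℤ) ^ #R := by
        rw [sum_filter]
        refine sum_congr rfl fun R _ => ?_
        simp only [← sum_mul, sum_powerset_neg_one_pow_card, filter_eq_empty_iff]
        split_ifs <;> simp

theorem forall_not_disjoint_powersetCard_iff (v : ℕ) (R : Finset α) :
    (∀ S ∈ powersetCard v univ, ¬ Disjoint S R) ↔ #Rᶜ < v := by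
  rw [← powersetCard_eq_empty, eq_empty_iff_forall_notMem]
  simp only [mem_powersetCard, subset_univ, true_and, subset_compl_iff_disjoint_right, not_and]
  exact forall_congr' fun _ => imp_not_comm

theorem neg_one_pow_card_eq_mul_neg_one_pow_card_compl (R : Finset α) :
    (-1 : ℤ) ^ #R = (-1) ^ Fintype.card α * (-1) ^ #Rᶜ := by
  rw [← card_compl_add_card R, pow_add, mul_comm, ← mul_assoc, ← pow_add,
    Even.neg_one_pow ⟨_, rfl⟩, one_mul]

theorem sum_card_compl_lt_neg_one_pow_card (v : ℕ) :
    ∑ R : Finset α with #Rᶜ < v, (-1 : ℤ) ^ #R =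
      (-1) ^ Fintype.card α * ∑ k ∈ range v, (-1 : ℤ) ^ k * (Fintype.card α).choose k := by
  rw [← sum_card_lt_neg_one_pow_card, mul_sum, sum_filter, sum_filter]
  rw [← compl_bijective.sum_comp (fun T : Finset α => if #T < v then _ else 0)]
  refine sum_congr rfl fun R _ => ?_
  rw [neg_one_pow_card_eq_mul_neg_one_pow_card_compl R]

theorem card_mem_Icc_of_mem_coverings [Nonempty α] {v : ℕ} {F : Finset (Finset α)}
    (hF : F ∈ coverings (powersetCard v univ)) :
    #F ∈ Icc 1 ((Fintype.card α).choose v) := by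
  obtain ⟨hF𝒮, hsup⟩ := mem_filter.1 hF
  refine mem_Icc.2 ⟨card_pos.2 (nonempty_iff_ne_empty.2 ?_), ?_⟩
  · rintro rfl
    exact univ_nonempty.ne_empty (by simpa using hsup.symm)
  · simpa using card_le_card (mem_powerset.1 hF𝒮)

end Coverings

theorem vCovers_eq_filter_coverings (j ℓ v : ℕ) :
    vCovers j ℓ v = {F ∈ coverings (powersetCard v (univ : Finset (Fin j))) | #F = ℓ} := by
  ext F
  simp only [vCovers, coverings, mem_filter, mem_univ, true_and, mem_powerset, subset_iff,
    mem_powersetCard_univ]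
  tauto

theorem sum_Icc_mul_numVCovers {j : ℕ} (hj : 0 < j) (v : ℕ) (f : ℕ → ℤ) :
    ∑ ℓ ∈ Icc 1 (j.choose v), f ℓ * numVCovers j ℓ v =
      ∑ F ∈ coverings (powersetCard v (univ : Finset (Fin j))), f #F := by
  have : Nonempty (Fin j) := ⟨⟨0, hj⟩⟩
  refine Eq.trans ?_ (sum_fiberwise_of_maps_to (fun F hF => by
    simpa only [Fintype.card_fin] using card_mem_Icc_of_mem_coverings hF) _)
  refine sum_congr rfl fun ℓ _ => ?_
  rw [numVCovers, vCovers_eq_filter_coverings,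
    sum_congr rfl fun F hF => by rw [(mem_filter.1 hF).2], sum_const, nsmul_eq_mul, mul_comm]

/-- The paper's signs `(-1)^(ℓ-1)` and `(-1)^(j-v)` are written `(-1)^(ℓ+1)` and `(-1)^(j+v)`,
which avoids truncated subtraction in the exponents. -/
theorem alternating_sum_numVCovers (j v : ℕ) (hv : 1 ≤ v) (hj : max 2 v ≤ j) :
    ∑ ℓ ∈ Finset.Icc 1 (j.choose v), (-1 : ℤ) ^ (ℓ + 1) * numVCovers j ℓ v =
      (-1 : ℤ) ^ (j + v) * ((j - 1).choose (v - 1)) := by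
  obtain ⟨n, rfl⟩ : ∃ n, j = n + 1 := Nat.exists_eq_add_one.2 (by omega)
  obtain ⟨u, rfl⟩ : ∃ u, v = u + 1 := Nat.exists_eq_add_one.2 hv
  rw [Nat.add_sub_cancel, Nat.add_sub_cancel]
  calc ∑ ℓ ∈ Icc 1 ((n + 1).choose (u + 1)), (-1 : ℤ) ^ (ℓ + 1) * numVCovers (n + 1) ℓ (u + 1)
      = -∑ F ∈ coverings (powersetCard (u + 1) (univ : Finset (Fin (n + 1)))), (-1 : ℤ) ^ #F := by
        simp only [sum_Icc_mul_numVCovers n.succ_pos, pow_succ, mul_neg_one, sum_neg_distrib]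
    _ = -∑ R : Finset (Fin (n + 1)) with #Rᶜ < u + 1, (-1 : ℤ) ^ #R := by
        rw [sum_coverings_neg_one_pow_card,
          filter_congr fun R _ => forall_not_disjoint_powersetCard_iff (u + 1) R]
    _ = (-1) ^ (n + 1 + (u + 1)) * (n.choose u) := by
        rw [sum_card_compl_lt_neg_one_pow_card, Fintype.card_fin,
          Int.alternating_sum_range_choose_eq_choose]
        ring
end

section
/- For integers $2 \le r$ and $j \ge r+2$, we have $\sum_{u=1}^{r} (r+1-u)(-1)^{j-u}\binom{j-1}{u-1} = (-1)^{j-r}\binom{j-3}{r-2}\left(\frac{r(j-2)}{r-1}-(j-1)\right)$. -/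
open Finset

lemma partialAlt (n : ℕ) : ∀ m : ℕ,
    ∑ u ∈ Finset.Icc 1 (m+1), (-1:ℚ)^u * ((n+1).choose (u-1) : ℚ)
      = (-1:ℚ)^(m+1) * (n.choose m : ℚ) := by
  intro m
  induction m with
  | zero => simp
  | succ m ih =>
    rw [Finset.sum_Icc_succ_top (by omega), ih]
    have e : (m+2-1 : ℕ) = m+1 := rfl
    have hc : ((n+1).choose (m+1) : ℚ) = (n.choose m : ℚ) + (n.choose (m+1) : ℚ) := by
      rw [Nat.choose_succ_succ']
      push_cast
      ring
    rw [e, hc]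
    ring

lemma mainL (r : ℕ) (hr : 1 ≤ r) : ∀ j, r + 2 ≤ j →
    ∑ u ∈ Finset.Icc 1 r, ((r+1-u : ℕ):ℚ) * (-1:ℚ)^(j+u) * (((j-1).choose (u-1) : ℕ):ℚ)
      = (-1:ℚ)^(j+r) * (((j-3).choose (r-1) : ℕ):ℚ) := by
  induction r, hr using Nat.le_induction with
  | base =>
    intro j hj
    simp
  | succ r hr ih =>
    intro j hj
    obtain ⟨w, rfl⟩ : ∃ w, j = w + 4 := ⟨j - 4, by omega⟩
    -- split weight (r+2-u) = (r+1-u) + 1 on Icc 1 (r+1)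
    have hsplit : ∀ u ∈ Finset.Icc 1 (r+1),
        ((r+1+1-u : ℕ):ℚ) * (-1:ℚ)^(w+4+u) * (((w+4-1).choose (u-1) : ℕ):ℚ)
          = ((r+1-u : ℕ):ℚ) * (-1:ℚ)^(w+4+u) * (((w+4-1).choose (u-1) : ℕ):ℚ)
            + (-1:ℚ)^(w+4+u) * (((w+4-1).choose (u-1) : ℕ):ℚ) := by
      intro u hu
      simp only [Finset.mem_Icc] at hu
      have : (r+1+1-u : ℕ) = (r+1-u) + 1 := by omega
      rw [this]
      push_cast
      ring
    rw [Finset.sum_congr rfl hsplit, Finset.sum_add_distrib]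
    -- first sum: top term vanishes, equals IH
    have h1 : ∑ u ∈ Finset.Icc 1 (r+1),
        ((r+1-u : ℕ):ℚ) * (-1:ℚ)^(w+4+u) * (((w+4-1).choose (u-1) : ℕ):ℚ)
        = (-1:ℚ)^(w+4+r) * (((w+4-3).choose (r-1) : ℕ):ℚ) := by
      rw [Finset.sum_Icc_succ_top (by omega)]
      have : (r+1-(r+1) : ℕ) = 0 := by omega
      rw [this]
      rw [ih (w+4) (by omega)]
      push_cast
      ring
    -- second sum: partial alternating sum
    have h2 : ∑ u ∈ Finset.Icc 1 (r+1),
        (-1:ℚ)^(w+4+u) * (((w+4-1).choose (u-1) : ℕ):ℚ)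
        = (-1:ℚ)^(w+4+r+1) * (((w+2).choose r : ℕ):ℚ) := by
      have := partialAlt (w+2) r
      calc ∑ u ∈ Finset.Icc 1 (r+1), (-1:ℚ)^(w+4+u) * (((w+4-1).choose (u-1) : ℕ):ℚ)
          = (-1:ℚ)^(w+4) * ∑ u ∈ Finset.Icc 1 (r+1), (-1:ℚ)^u * (((w+2+1).choose (u-1)):ℚ) := by
            rw [Finset.mul_sum]
            apply Finset.sum_congr rfl
            intro u hu
            show _ = (-1:ℚ)^(w+4) * ((-1:ℚ)^u * _)
            rw [← mul_assoc, ← pow_add]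
            norm_num
        _ = (-1:ℚ)^(w+4) * ((-1:ℚ)^(r+1) * (((w+2).choose r):ℚ)) := by rw [this]
        _ = (-1:ℚ)^(w+4+r+1) * (((w+2).choose r : ℕ):ℚ) := by rw [pow_add, pow_add]; ring
    rw [h1, h2]
    -- Pascal: C(w+2, r) = C(w+1, r-1) + C(w+1, r)
    obtain ⟨s, rfl⟩ : ∃ s, r = s + 1 := ⟨r - 1, by omega⟩
    have pascal : ((w+2).choose (s+1) : ℚ) = ((w+1).choose s : ℚ) + ((w+1).choose (s+1) : ℚ) := by
      have := Nat.choose_succ_succ (w+1) s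
      push_cast [this]; ring
    have e3 : (w+4-3 : ℕ) = w+1 := by omega
    have e4 : (s+1-1 : ℕ) = s := by omega
    have e5 : (s+1+1-1 : ℕ) = s+1 := by omega
    rw [e3, e4, e5, pascal]
    ring

/-- For `2 ≤ r` and `j ≥ r+2`:
`∑_{u=1}^{r} (r+1-u)(-1)^{j-u} C(j-1,u-1)
  = (-1)^{j-r} C(j-3,r-2) (r(j-2)/(r-1) - (j-1))`.
(We write `(-1)^(j+u)` and `(-1)^(j+r)`, which agree with `(-1)^{j-u}` and
`(-1)^{j-r}` for integers.) -/
theorem weighted_alternating_binomial_sum (r j : ℕ) (hr : 2 ≤ r) (hj : r + 2 ≤ j) :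
    ∑ u ∈ Finset.Icc 1 r,
        ((r + 1 - u : ℕ) : ℚ) * (-1 : ℚ) ^ (j + u) * (((j - 1).choose (u - 1) : ℕ) : ℚ) =
      (-1 : ℚ) ^ (j + r) * (((j - 3).choose (r - 2) : ℕ) : ℚ) *
        ((r : ℚ) * ((j : ℚ) - 2) / ((r : ℚ) - 1) - ((j : ℚ) - 1)) := by
  rw [mainL r (by omega) j hj]
  obtain ⟨s, rfl⟩ : ∃ s, r = s + 2 := ⟨r - 2, by omega⟩
  have e1 : (s+2-1 : ℕ) = s+1 := by omega
  have e2 : (s+2-2 : ℕ) = s := by omega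
  rw [e1, e2]
  -- choose ratio: C(j-3, s+1) * (s+1) = C(j-3, s) * (j-3-s)
  have hratio : ((j-3).choose (s+1) : ℚ) * ((s:ℚ)+1) = ((j-3).choose s : ℚ) * ((j:ℚ) - 3 - s) := by
    have h := Nat.choose_succ_right_eq (j-3) s
    have hsub : (j - 3 - s : ℕ) = j - (3 + s) := by omega
    have hc : ((j - 3 - s : ℕ) : ℚ) = (j:ℚ) - 3 - s := by
      rw [hsub]
      push_cast [Nat.cast_sub (by omega : 3 + s ≤ j)]
      ring
    calc ((j-3).choose (s+1) : ℚ) * ((s:ℚ)+1)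
        = (((j-3).choose (s+1) * (s+1) : ℕ) : ℚ) := by push_cast; ring
      _ = (((j-3).choose s * (j - 3 - s) : ℕ) : ℚ) := by rw [h]
      _ = ((j-3).choose s : ℚ) * ((j:ℚ) - 3 - s) := by push_cast [hc]; ring
  have hne : ((s:ℚ)+2) - 1 ≠ 0 := by
    have : (0:ℚ) ≤ s := Nat.cast_nonneg s
    intro h; nlinarith
  have key : (((j-3).choose (s+1) : ℕ) : ℚ) = (((j-3).choose s : ℕ) : ℚ) *
      (((s:ℚ)+2) * ((j:ℚ)-2) / (((s:ℚ)+2)-1) - ((j:ℚ)-1)) := by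
    field_simp
    linear_combination hratio
  push_cast
  rw [key]
  ring
end

section
/- Let $\delta \in [0,1]$, $L \ge 2$, and define $\rho^{(\delta,L)}(x) = \max_{1 \le r \le L}\left\{\frac{2L-r+1}{L+1}x - \frac{L}{r}(1-\delta)\right\}$. Then for all $x$ with $1-\delta \le x \le \frac{L+1}{L-1}(1-\delta)$, $\rho^{(\delta,L)}(x) = x - (1-\delta)$. -/
/-- On `[1-δ, (L+1)/(L-1) (1-δ)]` the function
`ρ^{(δ,L)}(x) = max_{1 ≤ r ≤ L} ((2L-r+1)/(L+1) x - (L/r)(1-δ))`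
equals `x - (1-δ)`. -/
theorem rho_eq_on_first_piece (δ : ℝ) (hδ0 : 0 ≤ δ) (hδ1 : δ ≤ 1)
    (L : ℕ) (hL : 2 ≤ L) (x : ℝ) (hx1 : 1 - δ ≤ x)
    (hx2 : x ≤ ((L : ℝ) + 1) / ((L : ℝ) - 1) * (1 - δ)) :
    (Finset.Icc 1 L).sup' (Finset.nonempty_Icc.mpr (by omega))
        (fun r : ℕ =>
          (2 * (L : ℝ) - (r : ℝ) + 1) / ((L : ℝ) + 1) * x -
            (L : ℝ) / (r : ℝ) * (1 - δ)) =
      x - (1 - δ) := by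
  have hL2 : (2:ℝ) ≤ (L:ℝ) := by exact_mod_cast hL
  have hL1 : (0:ℝ) < (L:ℝ) + 1 := by linarith
  have hLm1 : (0:ℝ) < (L:ℝ) - 1 := by linarith
  have hx0 : 0 ≤ x := by linarith
  have hxL : x * ((L:ℝ) - 1) ≤ ((L:ℝ) + 1) * (1 - δ) := by
    calc x * ((L:ℝ) - 1) ≤ (((L:ℝ) + 1) / ((L:ℝ) - 1) * (1 - δ)) * ((L:ℝ) - 1) :=
          mul_le_mul_of_nonneg_right hx2 hLm1.le
      _ = ((L:ℝ) + 1) * (1 - δ) := by field_simp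
  apply le_antisymm
  · apply Finset.sup'_le
    intro r hr
    simp only [Finset.mem_Icc] at hr
    have hr1 : (1:ℝ) ≤ (r:ℝ) := by exact_mod_cast hr.1
    have hr0 : (0:ℝ) < (r:ℝ) := by linarith
    have hrL : (r:ℝ) ≤ (L:ℝ) := by exact_mod_cast hr.2
    rcases eq_or_lt_of_le hrL with h | h
    · rw [h]
      have : (L:ℝ)/(L:ℝ) = 1 := div_self (by linarith)
      rw [this]
      have : (2*(L:ℝ) - (L:ℝ) + 1)/((L:ℝ)+1) = 1 := by
        rw [div_eq_one_iff_eq (by linarith)]; ring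
      rw [this]; ring_nf; rfl
    · -- r ≤ L - 1
      have hrL1 : (r:ℝ) ≤ (L:ℝ) - 1 := by
        have : r + 1 ≤ L := by
          have : (r:ℝ) < (L:ℝ) := h
          exact_mod_cast Nat.succ_le_of_lt (by exact_mod_cast this)
        have : ((r:ℝ)) + 1 ≤ (L:ℝ) := by exact_mod_cast this
        linarith
      have key : x * (r:ℝ) ≤ ((L:ℝ) + 1) * (1 - δ) := by
        calc x * (r:ℝ) ≤ x * ((L:ℝ) - 1) := by
              apply mul_le_mul_of_nonneg_left hrL1 hx0
          _ ≤ _ := hxL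
      rw [div_mul_eq_mul_div, div_mul_eq_mul_div, div_sub_div _ _ (ne_of_gt hL1) (ne_of_gt hr0),
        div_le_iff₀ (by positivity)]
      nlinarith [mul_le_mul_of_nonneg_left key (by linarith : (0:ℝ) ≤ (L:ℝ) - (r:ℝ))]
  · apply Finset.le_sup'_of_le _ (b := L) (by simp; omega)
    have h1 : (L:ℝ)/(L:ℝ) = 1 := div_self (by linarith)
    have h2 : (2*(L:ℝ) - (L:ℝ) + 1)/((L:ℝ)+1) = 1 := by
      rw [div_eq_one_iff_eq (by linarith)]; ring
    rw [h1, h2]; ring_nf; rfl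
end
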